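/- Assume u := 1 + b₂² + ⋯ + b_n² is a unit of ZMod N. Then the complex square matrix F, indexed by the elements of L_N and with entries F_{x,z} := N^{−(n−1)/2} · e(−⟨x,z⟩), is unitary: F · Fᴴ = I, where Fᴴ is the conjugate transpose. In particular the characters χ_x(z) = e(−⟨x,z⟩) for x ∈ L_N define a Discrete Fourier Transform on L_N. -/

import Mathlib

/-- The additive character `e : ZMod N → ℂ`, `e c = exp(2πi · c.val / N)`. -/
noncomputable def eChar (N : ℕ) (c : ZMod N) : ℂ :=
  Complex.exp (2 * Real.pi * Complex.I * (c.val : ℂ) / (N : ℂ))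

section aux
variable {N : ℕ} [NeZero N]

lemma zeta_pow : (Complex.exp (2 * Real.pi * Complex.I / N)) ^ N = 1 := by
  have := Complex.isPrimitiveRoot_exp N (NeZero.ne N)
  exact this.pow_eq_one

noncomputable def psi (N : ℕ) [NeZero N] : AddChar (ZMod N) ℂ :=
  AddChar.zmodChar N (zeta_pow (N := N))

lemma psi_eq (c : ZMod N) : psi N c = eChar N c := by
  rw [psi, AddChar.zmodChar_apply, eChar, ← Complex.exp_nat_mul]
  ring_nf

lemma psi_prim : (psi N).IsPrimitive := by
  exact AddChar.zmodChar_primitive_of_primitive_root N (Complex.isPrimitiveRoot_exp N (NeZero.ne N))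

lemma psi_map_sum {ι : Type*} (s : Finset ι) (f : ι → ZMod N) :
    psi N (∑ i ∈ s, f i) = ∏ i ∈ s, psi N (f i) := by
  classical
  induction s using Finset.cons_induction with
  | empty => simp [AddChar.map_zero_eq_one]
  | cons a s ha ih =>
    rw [Finset.sum_cons, Finset.prod_cons, AddChar.map_add_eq_mul, ih]

end aux

section main
variable {n N : ℕ} [NeZero N] (b : Fin (n + 1) → ZMod N)

lemma sum_erase_zero (f : Fin (n + 1) → ZMod N) :
    ∑ i ∈ Finset.univ.erase 0, f i = ∑ i : Fin n, f i.succ := by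
  have h1 : ∑ i, f i = f 0 + ∑ i : Fin n, f i.succ := Fin.sum_univ_succ f
  have h2 : f 0 + ∑ i ∈ Finset.univ.erase 0, f i = ∑ i, f i :=
    Finset.add_sum_erase _ f (Finset.mem_univ 0)
  exact add_left_cancel (h2.trans h1)

lemma conj_psi (c : ZMod N) : (starRingEnd ℂ) (psi N c) = psi N (-c) := by
  have hne : psi N c ≠ 0 := by
    rw [psi_eq, eChar]; exact Complex.exp_ne_zero _
  have h1 : psi N (-c) * psi N c = 1 := by
    rw [← AddChar.map_add_eq_mul]; simp
  have h2 : (starRingEnd ℂ) (psi N c) * psi N c = 1 := by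
    rw [psi_eq, eChar, ← Complex.exp_conj, ← Complex.exp_add]
    rw [show ((starRingEnd ℂ) (2 * Real.pi * Complex.I * (c.val : ℂ) / (N : ℂ)) +
        2 * Real.pi * Complex.I * (c.val : ℂ) / (N : ℂ)) = 0 by
      simp only [map_div₀, map_mul, Complex.conj_I, map_ofNat, Complex.conj_natCast,
        Complex.conj_ofReal]
      ring]
    exact Complex.exp_zero
  exact mul_right_cancel₀ hne (h1 ▸ h2)

lemma inner_formula (x z : Fin (n + 1) → ZMod N)
    (hz : z 0 = ∑ i ∈ Finset.univ.erase 0, b i * z i) :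
    ∑ i, x i * z i = ∑ i : Fin n, (x 0 * b i.succ + x i.succ) * z i.succ := by
  rw [Fin.sum_univ_succ, hz, sum_erase_zero, Finset.mul_sum, ← Finset.sum_add_distrib]
  exact Finset.sum_congr rfl fun i _ => by ring

lemma key_sum (hu : IsUnit (1 + ∑ i ∈ Finset.univ.erase 0, b i ^ 2))
    (w : Fin (n + 1) → ZMod N)
    (hw : w 0 = ∑ i ∈ Finset.univ.erase 0, b i * w i) :
    ∑ z : {v : Fin (n + 1) → ZMod N // v 0 = ∑ i ∈ Finset.univ.erase 0, b i * v i},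
      psi N (∑ i, w i * z.1 i) = if w = 0 then ((N : ℂ)) ^ n else 0 := by
  classical
  set L := {v : Fin (n + 1) → ZMod N // v 0 = ∑ i ∈ Finset.univ.erase 0, b i * v i}
  -- the parametrizing equivalence
  have mem : ∀ g : Fin n → ZMod N,
      (Fin.cons (∑ i : Fin n, b i.succ * g i) g : Fin (n+1) → ZMod N) 0 =
      ∑ i ∈ Finset.univ.erase 0, b i *
        (Fin.cons (∑ i : Fin n, b i.succ * g i) g : Fin (n+1) → ZMod N) i := by
    intro g
    rw [sum_erase_zero]
    simp [Fin.cons_zero, Fin.cons_succ]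
  let E : (Fin n → ZMod N) ≃ L :=
  { toFun := fun g => ⟨Fin.cons (∑ i : Fin n, b i.succ * g i) g, mem g⟩
    invFun := fun z i => z.1 i.succ
    left_inv := fun g => by funext i; simp [Fin.cons_succ]
    right_inv := fun z => by
      apply Subtype.ext
      funext i
      refine Fin.cases ?_ (fun j => ?_) i
      · simp only [Fin.cons_zero]
        rw [z.2, sum_erase_zero]
      · simp [Fin.cons_succ] }
  rw [← Equiv.sum_comp E]
  set c : Fin n → ZMod N := fun i => w 0 * b i.succ + w i.succ with hc
  have hinner : ∀ g : Fin n → ZMod N,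
      ∑ i, w i * (E g).1 i = ∑ i : Fin n, c i * g i := by
    intro g
    rw [inner_formula b w _ (E g).2]
    exact Finset.sum_congr rfl fun i _ => by simp [E, hc, Fin.cons_succ]
  simp_rw [hinner, psi_map_sum]
  rw [← Fintype.prod_sum (fun i (t : ZMod N) => psi N (c i * t))]
  have hfac : ∀ i : Fin n, ∑ t : ZMod N, psi N (c i * t) =
      if c i = 0 then ((N : ℂ)) else 0 := by
    intro i
    simp_rw [mul_comm (c i)]
    rw [AddChar.sum_mulShift _ psi_prim]
    simp [ZMod.card]
  simp_rw [hfac]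
  have hprod : (∏ i : Fin n, if c i = 0 then (N : ℂ) else 0) =
      if (∀ i, c i = 0) then ((N : ℂ)) ^ n else 0 := by
    split_ifs with h
    · simp [h]
    · push_neg at h
      obtain ⟨i, hi⟩ := h
      exact Finset.prod_eq_zero (Finset.mem_univ i) (by simp [hi])
  have hiff : (∀ i, c i = 0) ↔ w = 0 := by
    constructor
    · intro h
      have hsucc : ∀ i : Fin n, w i.succ = -(w 0 * b i.succ) := by
        intro i
        have hci := h i
        rw [hc] at hci
        linear_combination hci
      have e1 : w 0 = -(w 0 * ∑ i : Fin n, b i.succ ^ 2) := by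
        calc w 0 = ∑ i : Fin n, b i.succ * w i.succ := by rw [hw, sum_erase_zero]
          _ = ∑ i : Fin n, -(w 0 * b i.succ ^ 2) :=
              Finset.sum_congr rfl fun i _ => by rw [hsucc i]; ring
          _ = -(w 0 * ∑ i : Fin n, b i.succ ^ 2) := by
              rw [Finset.mul_sum, ← Finset.sum_neg_distrib]
      have h0 : w 0 * (1 + ∑ i ∈ Finset.univ.erase 0, b i ^ 2) = 0 := by
        rw [sum_erase_zero fun i => b i ^ 2]
        linear_combination e1
      have h00 : w 0 = 0 := (hu.mul_left_eq_zero).mp h0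
      funext i
      refine Fin.cases ?_ (fun j => ?_) i
      · exact h00
      · simp [hsucc j, h00]
    · intro h i
      rw [hc]
      simp [h]
  rw [hprod, if_congr hiff rfl rfl]

end main

/-- Assume `u = 1 + ∑_{i ≠ 0} (b i)²` is a unit of `ZMod N`.  Then the
complex square matrix `F` indexed by the elements of `L_N`, with entries
`F x z = (√(N^n))⁻¹ * e(-⟨x, z⟩)` (where `N^n = N^(dim-1) = |L_N|`), is unitary:
`F * Fᴴ = 1`.  In particular the characters `χ_x(z) = e(-⟨x,z⟩)` for `x ∈ L_N` define a
Discrete Fourier Transform on `L_N`. -/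
theorem stmt_10 (n N : ℕ) [NeZero N] (b : Fin (n + 1) → ZMod N)
    (hu : IsUnit (1 + ∑ i ∈ Finset.univ.erase 0, b i ^ 2))
    (F : Matrix {v : Fin (n + 1) → ZMod N // v 0 = ∑ i ∈ Finset.univ.erase 0, b i * v i}
      {v : Fin (n + 1) → ZMod N // v 0 = ∑ i ∈ Finset.univ.erase 0, b i * v i} ℂ)
    (hF : ∀ x z, F x z =
      (((Real.sqrt ((N : ℝ) ^ n))⁻¹ : ℝ) : ℂ) * eChar N (-∑ i, x.1 i * z.1 i)) :
    F * F.conjTranspose = 1 := by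
  classical
  ext x y
  rw [Matrix.mul_apply, Matrix.one_apply]
  have key : ∀ z : {v : Fin (n + 1) → ZMod N //
      v 0 = ∑ i ∈ Finset.univ.erase 0, b i * v i},
      (-∑ i, x.1 i * z.1 i) + ∑ i, y.1 i * z.1 i = ∑ i, (y.1 - x.1) i * z.1 i := by
    intro z
    rw [neg_add_eq_sub, ← Finset.sum_sub_distrib]
    exact Finset.sum_congr rfl fun i _ => by simp [Pi.sub_apply]; ring
  have hterm : ∀ z, F x z * (F.conjTranspose z y) =
      (((Real.sqrt ((N : ℝ) ^ n))⁻¹ : ℝ) : ℂ) * (((Real.sqrt ((N : ℝ) ^ n))⁻¹ : ℝ) : ℂ) *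
      psi N (∑ i, (y.1 - x.1) i * z.1 i) := by
    intro z
    rw [Matrix.conjTranspose_apply, hF, hF, ← psi_eq, ← psi_eq]
    rw [star_mul', Complex.star_def, Complex.conj_ofReal]
    rw [show ((starRingEnd ℂ) (psi N (-∑ i, y.1 i * z.1 i))) = psi N (∑ i, y.1 i * z.1 i) by
      rw [conj_psi, neg_neg]]
    rw [mul_comm ((((Real.sqrt ((N : ℝ) ^ n))⁻¹ : ℝ) : ℂ)) (psi N (∑ i, y.1 i * z.1 i))]
    rw [show (((Real.sqrt ((N : ℝ) ^ n))⁻¹ : ℝ) : ℂ) * psi N (-∑ i, x.1 i * z.1 i) *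
        (psi N (∑ i, y.1 i * z.1 i) * (((Real.sqrt ((N : ℝ) ^ n))⁻¹ : ℝ) : ℂ)) =
        (((Real.sqrt ((N : ℝ) ^ n))⁻¹ : ℝ) : ℂ) * (((Real.sqrt ((N : ℝ) ^ n))⁻¹ : ℝ) : ℂ) *
        (psi N (-∑ i, x.1 i * z.1 i) * psi N (∑ i, y.1 i * z.1 i)) by ring]
    rw [← AddChar.map_add_eq_mul, key z]
  simp_rw [hterm]
  have hwmem : (y.1 - x.1) 0 = ∑ i ∈ Finset.univ.erase 0, b i * (y.1 - x.1) i := by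
    simp only [Pi.sub_apply, mul_sub]
    rw [Finset.sum_sub_distrib, ← x.2, ← y.2]
  rw [← Finset.mul_sum, key_sum b hu _ hwmem]
  have hN : ((N : ℝ) ^ n) ≠ 0 := pow_ne_zero _ (Nat.cast_ne_zero.mpr (NeZero.ne N))
  have hrr : (((Real.sqrt ((N : ℝ) ^ n))⁻¹ : ℝ) : ℂ) *
      (((Real.sqrt ((N : ℝ) ^ n))⁻¹ : ℝ) : ℂ) = ((((N : ℝ) ^ n)⁻¹ : ℝ) : ℂ) := by
    rw [← Complex.ofReal_mul]
    congr 1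
    rw [← mul_inv, Real.mul_self_sqrt (by positivity)]
  rw [hrr]
  have hsub : (y.1 - x.1 = 0) ↔ (x = y) := by
    rw [sub_eq_zero]
    exact ⟨fun h => Subtype.ext h.symm, fun h => congrArg Subtype.val h.symm⟩
  rw [if_congr hsub rfl rfl]
  split_ifs with h
  · push_cast
    exact inv_mul_cancel₀ (pow_ne_zero _ (Nat.cast_ne_zero.mpr (NeZero.ne N)))
  · simp
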